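/- Let k be a field, P a finite graded poset, t ∈ P a maximal element, Q = P \ {t}, F the set of predecessors of t in P, and B = k^a[Q] the incidence S-ring of Q. Then for every u ∈ F and all n, m with m ≠ n, Tor_{n-1,m}^B(S, B e_{u,t}) = 0. -/

import Mathlib

/-!
The module `B e_{u,t}` is the projective `B e_{u,u}` shifted up by one degree: right
multiplication by `e_{t,u}`, `e_{z,t} ↦ e_{z,u}`, splits the action, so that
`N_{c+1} ≅ B_c ⊗_S N_1` with `N_1 = k e_{u,t}` and `N_0 = 0`. For a module induced in this way
from its degree-one part, the normalized bar complex has an explicit contracting homotopy: it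
splits the coefficient `w ∈ N_{c+1}`, `c ≥ 1`, off as a new last bar factor in `B_c`. As it is
zero on coefficient degree one, homology survives only in bidegree `(0, 1)`.
-/

noncomputable section
open MulOpposite
open scoped DirectSum

namespace P1605

section TensorR

variable (R : Type) [Ring R]
variable (M N : Type) [AddCommGroup M] [AddCommGroup N] [Module Rᵐᵒᵖ M] [Module R N]

/-- The subgroup of the `ℤ`-tensor product by which one quotients to obtain the
balanced tensor product `M ⊗_R N` of a right `R`-module and a left `R`-module. -/
def trel : Submodule ℤ (TensorProduct ℤ M N) :=
  Submodule.span ℤ {x | ∃ (r : R) (m : M) (n : N),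
    x = (op r • m) ⊗ₜ[ℤ] n - m ⊗ₜ[ℤ] (r • n)}

/-- The tensor product `M ⊗_R N` over a (possibly noncommutative) ring `R`,
of a right `R`-module `M` and a left `R`-module `N`. -/
def TensorR : Type := TensorProduct ℤ M N ⧸ trel R M N

instance : AddCommGroup (TensorR R M N) :=
  inferInstanceAs (AddCommGroup (TensorProduct ℤ M N ⧸ trel R M N))

variable {R M N}

/-- The canonical balanced biadditive map `M × N → M ⊗_R N`, `(m, n) ↦ m ⊗ n`. -/
def tp (m : M) (n : N) : TensorR R M N := Submodule.Quotient.mk (m ⊗ₜ[ℤ] n)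

theorem tp_add_left (m m' : M) (n : N) :
    tp (R := R) (m + m') n = tp m n + tp m' n := by
  exact (congrArg Submodule.Quotient.mk (TensorProduct.add_tmul m m' n)).trans
    (Submodule.Quotient.mk_add ..)

theorem tp_add_right (m : M) (n n' : N) :
    tp (R := R) m (n + n') = tp m n + tp m n' := by
  exact (congrArg Submodule.Quotient.mk (TensorProduct.tmul_add m n n')).trans
    (Submodule.Quotient.mk_add ..)

@[simp] theorem tp_zero_left (n : N) : tp (R := R) (0 : M) n = 0 := by
  show Submodule.Quotient.mk _ = _
  rw [TensorProduct.zero_tmul]; exact Submodule.Quotient.mk_eq_zero _ |>.2 (zero_mem _)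

@[simp] theorem tp_zero_right (m : M) : tp (R := R) m (0 : N) = 0 := by
  show Submodule.Quotient.mk _ = _
  rw [TensorProduct.tmul_zero]; exact Submodule.Quotient.mk_eq_zero _ |>.2 (zero_mem _)

/-- The balance relation `(m · r) ⊗ n = m ⊗ (r · n)`. -/
theorem tp_balance (r : R) (m : M) (n : N) :
    tp (R := R) (op r • m) n = tp m (r • n) :=
  (Submodule.Quotient.eq _).2 (Submodule.subset_span ⟨r, m, n, rfl⟩)

theorem tp_neg_left (m : M) (n : N) : tp (R := R) (-m) n = - tp m n := by
  have := tp_add_left (R := R) m (-m) n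
  rw [add_neg_cancel, tp_zero_left] at this
  exact eq_neg_of_add_eq_zero_right this.symm

end TensorR

section TensorR

variable {R : Type} [Ring R]
variable {M N : Type} [AddCommGroup M] [AddCommGroup N] [Module Rᵐᵒᵖ M] [Module R N]
variable {P : Type} [AddCommGroup P]

/-- Universal property: a balanced biadditive map lifts to the tensor product. -/
def liftT (f : M →+ N →+ P)
    (hf : ∀ (r : R) (m : M) (n : N), f (op r • m) n = f m (r • n)) :
    TensorR R M N →+ P :=
  ((trel R M N).liftQ
    (TensorProduct.lift (LinearMap.mk₂ ℤ (fun m n => f m n)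
      (fun m m' n => by simp)
      (fun z m n => by simp)
      (fun m n n' => by simp)
      (fun z m n => by simp)))
    (by
      rw [trel, Submodule.span_le]
      rintro x ⟨r, m, n, rfl⟩
      refine LinearMap.mem_ker.2 ?_; erw [map_sub, TensorProduct.lift.tmul, TensorProduct.lift.tmul]; simp [hf r m n])).toAddMonoidHom

@[simp] theorem liftT_tp (f : M →+ N →+ P)
    (hf : ∀ (r : R) (m : M) (n : N), f (op r • m) n = f m (r • n)) (m : M) (n : N) :
    liftT f hf (tp m n) = f m n := rfl

theorem TensorR.ind {motive : TensorR R M N → Prop} (z : TensorR R M N)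
    (h0 : motive 0) (htp : ∀ m n, motive (tp m n))
    (hadd : ∀ x y, motive x → motive y → motive (x + y)) : motive z := by
  obtain ⟨w, rfl⟩ := Submodule.Quotient.mk_surjective _ z
  induction w using TensorProduct.induction_on with
  | zero =>
      have : (Submodule.Quotient.mk (0 : TensorProduct ℤ M N) : TensorR R M N) = 0 :=
        (Submodule.Quotient.mk_eq_zero _).2 (zero_mem _)
      rw [this]; exact h0
  | tmul m n => exact htp m n
  | add x y hx hy =>
      rw [Submodule.Quotient.mk_add]
      exact hadd _ _ hx hy

theorem TensorR.addHom_ext {f g : TensorR R M N →+ P}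
    (h : ∀ m n, f (tp m n) = g (tp m n)) : f = g := by
  ext z
  induction z using TensorR.ind with
  | h0 => simp
  | htp m n => exact h m n
  | hadd x y hx hy => simp [hx, hy]

variable {M' N' : Type} [AddCommGroup M'] [AddCommGroup N'] [Module Rᵐᵒᵖ M'] [Module R N']

/-- Functoriality of the tensor product in both arguments, for equivariant additive maps. -/
def mapT (f : M →+ M') (g : N →+ N')
    (hf : ∀ (r : R) (m : M), f (op r • m) = op r • f m)
    (hg : ∀ (r : R) (n : N), g (r • n) = r • g n) :
    TensorR R M N →+ TensorR R M' N' :=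
  liftT (P := TensorR R M' N')
    (AddMonoidHom.mk' (fun m => AddMonoidHom.mk' (fun n => tp (R := R) (f m) (g n))
        (fun n n' => by rw [map_add, tp_add_right]))
      (fun m m' => by
        ext n
        show tp (R := R) (f (m + m')) (g n) = tp (f m) (g n) + tp (f m') (g n)
        rw [map_add, tp_add_left]))
    (fun r m n => by
      show tp (f (op r • m)) (g n) = tp (f m) (g (r • n))
      rw [hf, hg]; exact tp_balance r (f m) (g n))

@[simp] theorem mapT_tp (f : M →+ M') (g : N →+ N')
    (hf : ∀ (r : R) (m : M), f (op r • m) = op r • f m)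
    (hg : ∀ (r : R) (n : N), g (r • n) = r • g n) (m : M) (n : N) :
    mapT f g hf hg (tp m n) = tp (f m) (g n) := rfl

/-- A convenient unbundled version of the universal property. -/
def liftT₂ (f : M → N → P)
    (h1 : ∀ m m' n, f (m + m') n = f m n + f m' n)
    (h2 : ∀ m n n', f m (n + n') = f m n + f m n')
    (hb : ∀ (r : R) m n, f (op r • m) n = f m (r • n)) : TensorR R M N →+ P :=
  liftT (AddMonoidHom.mk' (fun m => AddMonoidHom.mk' (f m) (h2 m))
    (fun m m' => AddMonoidHom.ext fun n => h1 m m' n)) hb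

@[simp] theorem liftT₂_tp (f : M → N → P) (h1 : ∀ m m' n, f (m + m') n = f m n + f m' n)
    (h2 : ∀ m n n', f m (n + n') = f m n + f m n')
    (hb : ∀ (r : R) m n, f (op r • m) n = f m (r • n)) (m : M) (n : N) :
    liftT₂ f h1 h2 hb (tp m n) = f m n := rfl

end TensorR

section Modules

variable {R : Type} [Ring R]
variable {M N : Type} [AddCommGroup M] [AddCommGroup N] [Module Rᵐᵒᵖ M] [Module R N]

section Left
variable [Module R M] [SMulCommClass R Rᵐᵒᵖ M]

/-- Left `R`-action on the tensor product, through the left factor. -/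
def lsmT (r : R) : TensorR R M N →+ TensorR R M N :=
  mapT (DistribMulAction.toAddMonoidHom M r) (AddMonoidHom.id N)
    (fun s m => smul_comm r (op s) m) (fun _ _ => rfl)

instance instModLeftTensorR : Module R (TensorR R M N) where
  smul r z := lsmT r z
  one_smul z := by
    show lsmT 1 z = z
    induction z using TensorR.ind with
    | h0 => simp
    | htp m n => show tp ((1:R) • m) n = tp m n; rw [one_smul]
    | hadd x y hx hy => rw [map_add, hx, hy]
  mul_smul r s z := by
    show lsmT (r * s) z = lsmT r (lsmT s z)
    induction z using TensorR.ind with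
    | h0 => simp
    | htp m n => show tp ((r * s) • m) n = tp (r • s • m) n; rw [mul_smul]
    | hadd x y hx hy => simp only [map_add, hx, hy]
  smul_zero r := by show lsmT r 0 = 0; simp
  smul_add r x y := by show lsmT r (x + y) = lsmT r x + lsmT r y; simp
  add_smul r s z := by
    show lsmT (r + s) z = lsmT r z + lsmT s z
    induction z using TensorR.ind with
    | h0 => simp
    | htp m n =>
        show tp ((r + s) • m) n = tp (r • m) n + tp (s • m) n
        rw [add_smul, tp_add_left]
    | hadd x y hx hy =>
        rw [map_add, hx, hy, map_add, map_add]; abel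
  zero_smul z := by
    show lsmT 0 z = 0
    induction z using TensorR.ind with
    | h0 => simp
    | htp m n => show tp ((0:R) • m) n = 0; rw [zero_smul, tp_zero_left]
    | hadd x y hx hy => rw [map_add, hx, hy, add_zero]

@[simp] theorem lsm_tp (r : R) (m : M) (n : N) :
    r • (tp (R := R) m n : TensorR R M N) = tp (r • m) n := rfl

end Left

section Right
variable [Module Rᵐᵒᵖ N] [SMulCommClass R Rᵐᵒᵖ N]

/-- Right `R`-action on the tensor product, through the right factor. -/
def rsmT (s : Rᵐᵒᵖ) : TensorR R M N →+ TensorR R M N :=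
  mapT (AddMonoidHom.id M) (DistribMulAction.toAddMonoidHom N s)
    (fun _ _ => rfl) (fun r n => (smul_comm r s n).symm)

instance instModRightTensorR : Module Rᵐᵒᵖ (TensorR R M N) where
  smul s z := rsmT s z
  one_smul z := by
    show rsmT 1 z = z
    induction z using TensorR.ind with
    | h0 => simp
    | htp m n => show tp m ((1:Rᵐᵒᵖ) • n) = tp m n; rw [one_smul]
    | hadd x y hx hy => rw [map_add, hx, hy]
  mul_smul r s z := by
    show rsmT (r * s) z = rsmT r (rsmT s z)
    induction z using TensorR.ind with
    | h0 => simp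
    | htp m n => show tp m ((r * s) • n) = tp m (r • s • n); rw [mul_smul]
    | hadd x y hx hy => simp only [map_add, hx, hy]
  smul_zero r := by show rsmT r 0 = 0; simp
  smul_add r x y := by show rsmT r (x + y) = rsmT r x + rsmT r y; simp
  add_smul r s z := by
    show rsmT (r + s) z = rsmT r z + rsmT s z
    induction z using TensorR.ind with
    | h0 => simp
    | htp m n =>
        show tp m ((r + s) • n) = tp m (r • n) + tp m (s • n)
        rw [add_smul, tp_add_right]
    | hadd x y hx hy => rw [map_add, hx, hy, map_add, map_add]; abel
  zero_smul z := by
    show rsmT 0 z = 0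
    induction z using TensorR.ind with
    | h0 => simp
    | htp m n => show tp m ((0:Rᵐᵒᵖ) • n) = 0; rw [zero_smul, tp_zero_right]
    | hadd x y hx hy => rw [map_add, hx, hy, add_zero]

@[simp] theorem rsm_tp (s : Rᵐᵒᵖ) (m : M) (n : N) :
    s • (tp (R := R) m n : TensorR R M N) = tp m (s • n) := rfl

end Right

instance instSMulCommTensorR [Module R M] [SMulCommClass R Rᵐᵒᵖ M]
    [Module Rᵐᵒᵖ N] [SMulCommClass R Rᵐᵒᵖ N] :
    SMulCommClass R Rᵐᵒᵖ (TensorR R M N) where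
  smul_comm r s z := by
    induction z using TensorR.ind with
    | h0 => simp
    | htp m n => rw [rsm_tp, lsm_tp, lsm_tp, rsm_tp]
    | hadd x y hx hy => simp only [smul_add, hx, hy]

end Modules

section Assoc

variable {R : Type} [Ring R]
variable {M N P : Type} [AddCommGroup M] [AddCommGroup N] [AddCommGroup P]
variable [Module Rᵐᵒᵖ M]
variable [Module R N] [Module Rᵐᵒᵖ N] [SMulCommClass R Rᵐᵒᵖ N]
variable [Module R P]

/-- The associator `(M ⊗_R N) ⊗_R P → M ⊗_R (N ⊗_R P)`. -/
def assocT : TensorR R (TensorR R M N) P →+ TensorR R M (TensorR R N P) :=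
  liftT (P := TensorR R M (TensorR R N P))
    (liftT (P := P →+ TensorR R M (TensorR R N P))
      (AddMonoidHom.mk' (fun m => AddMonoidHom.mk'
          (fun n => AddMonoidHom.mk' (fun p => tp (R := R) m (tp (R := R) n p))
            (fun p p' => by rw [tp_add_right, tp_add_right]))
          (fun n n' => by
            ext p
            show tp (R := R) m (tp (R := R) (n + n') p) = tp m (tp n p) + tp m (tp n' p)
            rw [tp_add_left, tp_add_right]))
        (fun m m' => by
          ext n p
          show tp (R := R) (m + m') (tp (R := R) n p)
              = tp m (tp n p) + tp m' (tp n p)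
          rw [tp_add_left]))
      (fun r m n => by
        ext p
        show tp (R := R) (op r • m) (tp (R := R) n p) = tp m (tp (r • n) p)
        rw [tp_balance, lsm_tp]))
    (fun r x p => by
      induction x using TensorR.ind with
      | h0 => simp
      | htp m n =>
          rw [rsm_tp]
          show tp (R := R) m (tp (R := R) (op r • n) p) = tp m (tp n (r • p))
          rw [tp_balance]
      | hadd x y hx hy =>
          simp only [smul_add, map_add, AddMonoidHom.add_apply, hx, hy])

@[simp] theorem assocT_tp (m : M) (n : N) (p : P) :
    assocT (R := R) (tp (tp m n) p) = tp m (tp n p) := rfl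

/-- The associator `M ⊗_R (N ⊗_R P) → (M ⊗_R N) ⊗_R P`. -/
def assocT' : TensorR R M (TensorR R N P) →+ TensorR R (TensorR R M N) P :=
  liftT (P := TensorR R (TensorR R M N) P)
    (AddMonoidHom.mk'
      (fun m => liftT (P := TensorR R (TensorR R M N) P)
        (AddMonoidHom.mk' (fun n => AddMonoidHom.mk'
            (fun p => tp (R := R) (tp (R := R) m n) p)
            (fun p p' => by rw [tp_add_right]))
          (fun n n' => by
            ext p
            show tp (R := R) (tp (R := R) m (n + n')) p
                = tp (tp m n) p + tp (tp m n') p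
            rw [tp_add_right, tp_add_left]))
        (fun r n p => by
          show tp (R := R) (tp (R := R) m (op r • n)) p = tp (tp m n) (r • p)
          rw [show tp (R := R) m (op r • n) = op r • tp (R := R) m n from
            (rsm_tp _ _ _).symm, tp_balance]))
      (fun m m' => by
        apply TensorR.addHom_ext (R := R)
        intro n p
        show tp (R := R) (tp (R := R) (m + m') n) p
            = tp (tp m n) p + tp (tp m' n) p
        rw [tp_add_left, tp_add_left]))
    (fun r m w => by
      induction w using TensorR.ind with
      | h0 => simp
      | htp n p =>
          show tp (R := R) (tp (R := R) (op r • m) n) p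
              = tp (R := R) (tp (R := R) m (r • n)) p
          rw [tp_balance (R := R) r m n]
      | hadd x y hx hy => rw [smul_add, map_add, hx, hy, map_add])

@[simp] theorem assocT'_tp (m : M) (n : N) (p : P) :
    assocT' (R := R) (tp m (tp n p)) = tp (tp m n) p := rfl

end Assoc

/-- Transport of an additive group along an equality of indices in a family. -/
def fcast {α : Sort*} (F : α → Type) [∀ x, AddCommGroup (F x)] {a b : α} (h : a = b) :
    F a ≃+ F b := by subst h; exact AddEquiv.refl _

@[simp] theorem fcast_rfl {α : Sort*} (F : α → Type) [∀ x, AddCommGroup (F x)] (a : α)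
    (x : F a) : fcast F (rfl : a = a) x = x := rfl

section GradedRings

variable (R : Type) [Ring R]

/-- A connected graded `R`-ring: a ring `A` together with an `ℕ`-grading by additive
subgroups whose degree-zero part is a copy of `R` (via `emb`), with the multiplicative
grading property.  The (unique) augmentation `A → R` is part of the data. -/
structure GRing (A : Type) [Ring A] where
  emb : R →+* A
  aug : A →+* R
  deg : ℕ → AddSubgroup A
  internal : DirectSum.IsInternal deg
  emb_mem : ∀ r : R, emb r ∈ deg 0
  emb_surj : ∀ x ∈ deg 0, ∃ r : R, emb r = x
  emb_inj : Function.Injective emb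
  mul_mem : ∀ {p q : ℕ} {x y : A}, x ∈ deg p → y ∈ deg q → x * y ∈ deg (p + q)
  aug_emb : ∀ r : R, aug (emb r) = r
  aug_deg : ∀ (n : ℕ), ∀ x ∈ deg (n + 1), aug x = 0

variable {R}

/-- A connected graded ring is strongly graded when every multiplication map
`A_p ⊗ A_q → A_{p+q}` is surjective, i.e. each element of `A_{p+q}` is a sum of
products of elements of degrees `p` and `q`. -/
def GRing.StronglyGraded {A : Type} [Ring A] (G : GRing R A) : Prop :=
  ∀ p q : ℕ, ∀ z ∈ G.deg (p + q),
    z ∈ AddSubgroup.closure {w : A | ∃ x ∈ G.deg p, ∃ y ∈ G.deg q, w = x * y}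

/-- A grading, compatible with a graded ring `G`, on an `A`-module `M`. -/
structure GMod {A : Type} [Ring A] (G : GRing R A) (M : Type) [AddCommGroup M]
    [Module A M] where
  deg : ℕ → AddSubgroup M
  internal : DirectSum.IsInternal deg
  smul_mem : ∀ {p d : ℕ} {a : A} {x : M}, a ∈ G.deg p → x ∈ deg d → a • x ∈ deg (p + d)

/-- A resolution of `R` by projective graded left `A`-modules, in which the `n`-th
module is generated by its homogeneous component of degree `n`.  Existence of such a
resolution is the definition of Koszulity. -/
structure KResolution {A : Type} [Ring A] (G : GRing R A) where
  P : ℕ → Type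
  [acg : ∀ n, AddCommGroup (P n)]
  [mod : ∀ n, Module A (P n)]
  proj : ∀ n, Module.Projective A (P n)
  g : ∀ n, ℕ → AddSubgroup (P n)
  internal : ∀ n, DirectSum.IsInternal (g n)
  smul_mem : ∀ (n : ℕ) {p d : ℕ} {a : A} {x : P n},
    a ∈ G.deg p → x ∈ g n d → a • x ∈ g n (p + d)
  f : ∀ n, P (n + 1) →+ P n
  f_linear : ∀ (n : ℕ) (a : A) (x : P (n + 1)), f n (a • x) = a • f n x
  f_graded : ∀ (n d : ℕ), ∀ x ∈ g (n + 1) d, f n x ∈ g n d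
  eps : P 0 →+ R
  eps_linear : ∀ (a : A) (x : P 0), eps (a • x) = G.aug a * eps x
  eps_surj : Function.Surjective eps
  eps_graded : ∀ (d : ℕ), ∀ x ∈ g 0 (d + 1), eps x = 0
  comp0 : ∀ x : P 1, eps (f 0 x) = 0
  exact0 : ∀ x : P 0, eps x = 0 → x ∈ Set.range (f 0)
  comp : ∀ (n : ℕ) (x : P (n + 2)), f n (f (n + 1) x) = 0
  exact : ∀ (n : ℕ) (x : P (n + 1)), f n x = 0 → x ∈ Set.range (f (n + 1))
  gen : ∀ (n : ℕ) (x : P n),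
    x ∈ AddSubgroup.closure {z : P n | ∃ (a : A), ∃ y ∈ g n n, z = a • y}

/-- A connected graded `R`-ring is Koszul if `R` admits a resolution by projective
graded left `A`-modules such that the `n`-th module is generated in degree `n`. -/
def GRing.IsKoszul {A : Type} [Ring A] (G : GRing R A) : Prop :=
  Nonempty (KResolution G)

end GradedRings

section BarComplex

variable (R : Type) [Ring R]

/-- The data needed to form the (normalized, bigraded) bar complex of a connected
graded `R`-ring with coefficients in a graded left module: the components of the
ring and of the module, the multiplication maps and the action maps. -/
structure BarData where
  A : ℕ → Type
  [acgA : ∀ n, AddCommGroup (A n)]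
  [modA : ∀ n, Module R (A n)]
  [modAop : ∀ n, Module Rᵐᵒᵖ (A n)]
  [smulcommA : ∀ n, SMulCommClass R Rᵐᵒᵖ (A n)]
  N : ℕ → Type
  [acgN : ∀ d, AddCommGroup (N d)]
  [modN : ∀ d, Module R (N d)]
  μ : ∀ p q, TensorR R (A p) (A q) →+ A (p + q)
  μ_lsmul : ∀ (p q : ℕ) (r : R) (z : TensorR R (A p) (A q)), μ p q (r • z) = r • μ p q z
  μ_rsmul : ∀ (p q : ℕ) (s : Rᵐᵒᵖ) (z : TensorR R (A p) (A q)), μ p q (s • z) = s • μ p q z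
  σ : ∀ p d, TensorR R (A p) (N d) →+ N (p + d)
  σ_lsmul : ∀ (p d : ℕ) (r : R) (z : TensorR R (A p) (N d)), σ p d (r • z) = r • σ p d z

attribute [instance] BarData.acgA BarData.modA BarData.modAop BarData.smulcommA
  BarData.acgN BarData.modN

/-- An auxiliary bundle of an abelian group with a left `R`-module structure. -/
structure ModBundle : Type 1 where
  T : Type
  [acg : AddCommGroup T]
  [mod : Module R T]

attribute [instance] ModBundle.acg ModBundle.mod

variable {R} (B : BarData R)

/-- The iterated tensor product `A_{a_1} ⊗_R ⋯ ⊗_R A_{a_k} ⊗_R N_d`, bundled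
with its group and module structure. -/
def chainB : List ℕ → ℕ → ModBundle R
  | [], d => ⟨B.N d⟩
  | a :: l, d => ⟨TensorR R (B.A a) (chainB l d).T⟩

/-- The iterated tensor product `A_{a_1} ⊗_R ⋯ ⊗_R A_{a_k} ⊗_R N_d`. -/
def Chain (l : List ℕ) (d : ℕ) : Type := (chainB B l d).T

instance (l : List ℕ) (d : ℕ) : AddCommGroup (Chain B l d) := (chainB B l d).acg
instance (l : List ℕ) (d : ℕ) : Module R (Chain B l d) := (chainB B l d).mod

section Maps

variable {B}

/-- The left tensoring of a linear map. -/
def lmapL {M X Y : Type} [AddCommGroup M] [Module Rᵐᵒᵖ M] [Module R M]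
    [SMulCommClass R Rᵐᵒᵖ M] [AddCommGroup X] [AddCommGroup Y] [Module R X] [Module R Y]
    (g : X →ₗ[R] Y) : TensorR R M X →ₗ[R] TensorR R M Y where
  toFun := mapT (AddMonoidHom.id M) g.toAddMonoidHom (fun _ _ => rfl)
    (fun r x => g.map_smul r x)
  map_add' := map_add _
  map_smul' r z := by
    induction z using TensorR.ind with
    | h0 => simp
    | htp m x => rfl
    | hadd x y hx hy => rw [smul_add, map_add, hx, hy, map_add, smul_add]

@[simp] theorem lmapL_tp {M X Y : Type} [AddCommGroup M] [Module Rᵐᵒᵖ M] [Module R M]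
    [SMulCommClass R Rᵐᵒᵖ M] [AddCommGroup X] [AddCommGroup Y] [Module R X] [Module R Y]
    (g : X →ₗ[R] Y) (m : M) (x : X) : lmapL g (tp m x) = tp (R := R) m (g x) := rfl

/-- The action map as a linear map. -/
def sigL (p d : ℕ) : TensorR R (B.A p) (B.N d) →ₗ[R] B.N (p + d) where
  toFun := B.σ p d
  map_add' := map_add _
  map_smul' r z := B.σ_lsmul p d r z

/-- Multiplication of the two leftmost tensor factors. -/
def mh (a b : ℕ) (X : Type) [AddCommGroup X] [Module R X] :
    TensorR R (B.A a) (TensorR R (B.A b) X) →+ TensorR R (B.A (a + b)) X :=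
  liftT (P := TensorR R (B.A (a + b)) X)
    (AddMonoidHom.mk'
      (fun x => liftT (P := TensorR R (B.A (a + b)) X)
        (AddMonoidHom.mk' (fun y => AddMonoidHom.mk'
            (fun z => tp (R := R) (B.μ a b (tp x y)) z)
            (fun z z' => by rw [tp_add_right]))
          (fun y y' => by
            ext z
            show tp (R := R) (B.μ a b (tp x (y + y'))) z
                = tp (B.μ a b (tp x y)) z + tp (B.μ a b (tp x y')) z
            rw [tp_add_right, map_add, tp_add_left]))
        (fun r y z => by
          show tp (R := R) (B.μ a b (tp x (op r • y))) z = tp (B.μ a b (tp x y)) (r • z)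
          rw [← rsm_tp, B.μ_rsmul, tp_balance]))
      (fun x x' => by
        apply TensorR.addHom_ext (R := R)
        intro y z
        show tp (R := R) (B.μ a b (tp (x + x') y)) z
            = tp (B.μ a b (tp x y)) z + tp (B.μ a b (tp x' y)) z
        rw [tp_add_left, map_add, tp_add_left]))
    (fun r x w => by
      induction w using TensorR.ind with
      | h0 => simp
      | htp y z =>
          show tp (R := R) (B.μ a b (tp (op r • x) y)) z = tp (B.μ a b (tp x (r • y))) z
          rw [tp_balance]
      | hadd u v hu hv => simp only [smul_add, map_add, hu, hv])

@[simp] theorem mh_tp (a b : ℕ) (X : Type) [AddCommGroup X] [Module R X]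
    (x : B.A a) (y : B.A b) (z : X) :
    mh a b X (tp x (tp y z)) = tp (R := R) (B.μ a b (tp x y)) z := rfl

theorem mh_lsmul (a b : ℕ) (X : Type) [AddCommGroup X] [Module R X] (r : R)
    (w : TensorR R (B.A a) (TensorR R (B.A b) X)) :
    mh a b X (r • w) = r • mh a b X w := by
  induction w using TensorR.ind with
  | h0 => simp
  | htp x v =>
      rw [lsm_tp]
      induction v using TensorR.ind with
      | h0 => simp
      | htp y z =>
          rw [mh_tp, mh_tp, lsm_tp, ← B.μ_lsmul, lsm_tp]
      | hadd u v hu hv =>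
          rw [tp_add_right, tp_add_right, map_add, map_add, hu, hv, smul_add]
  | hadd u v hu hv => rw [smul_add, map_add, hu, hv, map_add, smul_add]

/-- Multiplication of the two leftmost tensor factors, as a linear map. -/
def mhL (a b : ℕ) (X : Type) [AddCommGroup X] [Module R X] :
    TensorR R (B.A a) (TensorR R (B.A b) X) →ₗ[R] TensorR R (B.A (a + b)) X where
  toFun := mh a b X
  map_add' := map_add _
  map_smul' r z := mh_lsmul a b X r z

end Maps

/-- The index, in the bar complex, obtained by merging the two entries at
positions `i` and `i + 1` of a composition (the module coefficient is treated as
the last entry). -/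
def mIdx : List ℕ → ℕ → ℕ → List ℕ × ℕ
  | [], d, _ => ([], d)
  | [a], d, _ => ([], a + d)
  | a :: b :: l, d, 0 => ((a + b) :: l, d)
  | a :: b :: l, d, i + 1 => (a :: (mIdx (b :: l) d i).1, (mIdx (b :: l) d i).2)

@[simp] theorem mIdx_nil (d i : ℕ) : mIdx [] d i = ([], d) := rfl
@[simp] theorem mIdx_single (a d i : ℕ) : mIdx [a] d i = ([], a + d) := rfl
@[simp] theorem mIdx_cons₀ (a b : ℕ) (l : List ℕ) (d : ℕ) :
    mIdx (a :: b :: l) d 0 = ((a + b) :: l, d) := rfl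
@[simp] theorem mIdx_consₛ (a b : ℕ) (l : List ℕ) (d i : ℕ) :
    mIdx (a :: b :: l) d (i + 1)
      = (a :: (mIdx (b :: l) d i).1, (mIdx (b :: l) d i).2) := rfl

theorem mIdx_spec (i : ℕ) : ∀ (l : List ℕ) (d : ℕ), l ≠ [] →
    (mIdx l d i).1.length + 1 = l.length ∧
    (mIdx l d i).1.sum + (mIdx l d i).2 = l.sum + d ∧
    ((∀ a ∈ l, a ≠ 0) → ∀ a ∈ (mIdx l d i).1, a ≠ 0) := by
  induction i with
  | zero =>
      rintro (_ | ⟨a, _ | ⟨b, l⟩⟩) d hl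
      · exact absurd rfl hl
      · simp
      · refine ⟨by simp only [mIdx_cons₀, List.length_cons], by
          simp only [mIdx_cons₀, List.sum_cons]; ring, ?_⟩
        intro hpos c hc
        simp only [mIdx_cons₀, List.mem_cons] at hc
        rcases hc with h | h
        · subst h
          have := hpos a (by simp)
          have := hpos b (by simp)
          omega
        · exact hpos c (by simp [h])
  | succ i ih =>
      rintro (_ | ⟨a, _ | ⟨b, l⟩⟩) d hl
      · exact absurd rfl hl
      · simp
      · obtain ⟨h1, h2, h3⟩ := ih (b :: l) d (by simp)
        refine ⟨by simp only [mIdx_consₛ, List.length_cons] at h1 ⊢; omega, by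
          simp only [mIdx_consₛ, List.sum_cons] at h2 ⊢; omega, ?_⟩
        intro hpos c hc
        simp only [mIdx_consₛ, List.mem_cons] at hc
        rcases hc with h | h
        · subst h; exact hpos c (by simp)
        · exact h3 (fun x hx => hpos x (by simp [hx])) c h

/-- The merging map on iterated tensor products: multiply the entries at
positions `i` and `i+1` (the module coefficient being the last entry). -/
def mMap : (l : List ℕ) → (d i : ℕ) → Chain B l d →ₗ[R] Chain B (mIdx l d i).1 (mIdx l d i).2
  | [], _, _ => LinearMap.id
  | [a], d, _ => sigL (B := B) a d
  | a :: b :: l, d, 0 => mhL (B := B) a b (Chain B l d)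
  | _ :: b :: l, d, i + 1 => lmapL (mMap (b :: l) d i)

/-- The index set of the internal-degree-`m`, homological-degree-`n` component of
the bar complex: compositions into `n` positive parts together with a module
degree, of total degree `m`. -/
def BIdx (n m : ℕ) : Type :=
  {p : List ℕ × ℕ // p.1.length = n ∧ p.1.sum + p.2 = m ∧ ∀ a ∈ p.1, a ≠ 0}

instance (n m : ℕ) : DecidableEq (BIdx n m) := fun a b =>
  decidable_of_iff (a.1 = b.1) Subtype.ext_iff.symm

/-- The `(n, m)` component of the (normalized) bar complex `Ω_*(A, m)`:
the direct sum, over compositions `m = m_1 + ⋯ + m_n + d` with the `m_i` positive,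
of `A_{m_1} ⊗ ⋯ ⊗ A_{m_n} ⊗ N_d`. -/
def Bar (n m : ℕ) : Type := ⨁ (p : BIdx n m), Chain B p.1.1 p.1.2

instance (n m : ℕ) : AddCommGroup (Bar B n m) :=
  inferInstanceAs (AddCommGroup (⨁ (p : BIdx n m), Chain B p.1.1 p.1.2))

/-- Merging at position `i`, on indices. -/
def mBIdx (n m : ℕ) (p : BIdx (n + 1) m) (i : ℕ) : BIdx n m := by
  refine ⟨mIdx p.1.1 p.1.2 i, ?_⟩
  have hne : p.1.1 ≠ [] := by
    intro h
    have := p.2.1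
    rw [h] at this
    simp at this
  obtain ⟨h1, h2, h3⟩ := mIdx_spec i p.1.1 p.1.2 hne
  exact ⟨by have := p.2.1; omega, by have := p.2.2.1; omega, h3 p.2.2.2⟩

/-- The bar differential. -/
def dBar (n m : ℕ) : Bar B (n + 1) m →+ Bar B n m :=
  DirectSum.toAddMonoid fun p =>
    ∑ i ∈ Finset.range (n + 1), (-1 : ℤ) ^ i •
      ((DirectSum.of (fun q : BIdx n m => Chain B q.1.1 q.1.2) (mBIdx n m p i)).comp
        (mMap B p.1.1 p.1.2 i).toAddMonoidHom)

/-- The bigraded Tor groups `Tor^A_{n,m}(R, N)`, defined as the homology of the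
internal-degree-`m` part of the normalized bar complex. -/
def Tor : ℕ → ℕ → Type
  | 0, m => Bar B 0 m ⧸ (dBar B 0 m).range
  | n + 1, m => (dBar B n m).ker ⧸ ((dBar B (n + 1) m).range.addSubgroupOf (dBar B n m).ker)

instance : ∀ (n m : ℕ), AddCommGroup (Tor B n m)
  | 0, m => inferInstanceAs (AddCommGroup (Bar B 0 m ⧸ (dBar B 0 m).range))
  | n + 1, m => inferInstanceAs
      (AddCommGroup ((dBar B n m).ker ⧸ ((dBar B (n + 1) m).range.addSubgroupOf (dBar B n m).ker)))

end BarComplex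

section BarOfGRing

variable {R : Type} [Ring R] {A : Type} [Ring A]

/-- The homogeneous component of degree `n` of a connected graded ring. -/
def GRing.Deg (G : GRing R A) (n : ℕ) : Type := ↥(G.deg n)

instance (G : GRing R A) (n : ℕ) : AddCommGroup (G.Deg n) :=
  inferInstanceAs (AddCommGroup ↥(G.deg n))

instance (G : GRing R A) (n : ℕ) : Module R (G.Deg n) where
  smul r x := ⟨G.emb r * x.1, by
    have := G.mul_mem (G.emb_mem r) x.2; rwa [zero_add] at this⟩
  one_smul x := Subtype.ext (by show G.emb 1 * x.1 = x.1; rw [map_one, one_mul])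
  mul_smul r s x := Subtype.ext (by
    show G.emb (r * s) * x.1 = G.emb r * (G.emb s * x.1); rw [map_mul, mul_assoc])
  smul_zero r := Subtype.ext (by show G.emb r * 0 = 0; rw [mul_zero])
  smul_add r x y := Subtype.ext (by
    show G.emb r * (x.1 + y.1) = G.emb r * x.1 + G.emb r * y.1; rw [mul_add])
  add_smul r s x := Subtype.ext (by
    show G.emb (r + s) * x.1 = G.emb r * x.1 + G.emb s * x.1; rw [map_add, add_mul])
  zero_smul x := Subtype.ext (by show G.emb 0 * x.1 = 0; rw [map_zero, zero_mul])

instance (G : GRing R A) (n : ℕ) : Module Rᵐᵒᵖ (G.Deg n) where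
  smul s x := ⟨x.1 * G.emb s.unop, G.mul_mem x.2 (G.emb_mem s.unop)⟩
  one_smul x := Subtype.ext (by
    show x.1 * G.emb (unop 1) = x.1; rw [unop_one, map_one, mul_one])
  mul_smul r s x := Subtype.ext (by
    show x.1 * G.emb (r * s).unop = (x.1 * G.emb s.unop) * G.emb r.unop
    rw [unop_mul, map_mul, mul_assoc])
  smul_zero r := Subtype.ext (by show 0 * G.emb r.unop = 0; rw [zero_mul])
  smul_add r x y := Subtype.ext (by
    show (x.1 + y.1) * G.emb r.unop = x.1 * G.emb r.unop + y.1 * G.emb r.unop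
    rw [add_mul])
  add_smul r s x := Subtype.ext (by
    show x.1 * G.emb (r + s).unop = x.1 * G.emb r.unop + x.1 * G.emb s.unop
    rw [unop_add, map_add, mul_add])
  zero_smul x := Subtype.ext (by
    show x.1 * G.emb (unop 0) = 0; rw [unop_zero, map_zero, mul_zero])

instance (G : GRing R A) (n : ℕ) : SMulCommClass R Rᵐᵒᵖ (G.Deg n) where
  smul_comm r s x := Subtype.ext (by
    show G.emb r * (x.1 * G.emb s.unop) = (G.emb r * x.1) * G.emb s.unop
    rw [mul_assoc])

@[simp] theorem GRing.degL_smul (G : GRing R A) (n : ℕ) (r : R) (x : G.Deg n) :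
    (r • x).1 = G.emb r * x.1 := rfl

@[simp] theorem GRing.degR_smul (G : GRing R A) (n : ℕ) (s : Rᵐᵒᵖ) (x : G.Deg n) :
    (s • x).1 = x.1 * G.emb s.unop := rfl

/-- The multiplication maps of a connected graded ring, on components. -/
def GRing.degMul (G : GRing R A) (p q : ℕ) :
    TensorR R (G.Deg p) (G.Deg q) →+ G.Deg (p + q) :=
  liftT₂ (fun x y => (⟨x.1 * y.1, G.mul_mem x.2 y.2⟩ : G.Deg (p + q)))
    (fun x x' y => Subtype.ext (add_mul x.1 x'.1 y.1))
    (fun x y y' => Subtype.ext (mul_add x.1 y.1 y'.1))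
    (fun r x y => Subtype.ext (mul_assoc x.1 (G.emb r) y.1))

theorem GRing.degMul_lsmul (G : GRing R A) (p q : ℕ) (r : R)
    (z : TensorR R (G.Deg p) (G.Deg q)) :
    G.degMul p q (r • z) = r • G.degMul p q z := by
  induction z using TensorR.ind with
  | h0 => simp
  | htp x y =>
      rw [lsm_tp]
      exact Subtype.ext (mul_assoc (G.emb r) x.1 y.1)
  | hadd u v hu hv => rw [smul_add, map_add, hu, hv, map_add, smul_add]

theorem GRing.degMul_rsmul (G : GRing R A) (p q : ℕ) (s : Rᵐᵒᵖ)
    (z : TensorR R (G.Deg p) (G.Deg q)) :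
    G.degMul p q (s • z) = s • G.degMul p q z := by
  induction z using TensorR.ind with
  | h0 => simp
  | htp x y =>
      rw [rsm_tp]
      exact Subtype.ext (mul_assoc x.1 y.1 (G.emb s.unop)).symm
  | hadd u v hu hv => rw [smul_add, map_add, hu, hv, map_add, smul_add]

variable {G : GRing R A} {M : Type} [AddCommGroup M] [Module A M]

/-- The homogeneous component of degree `d` of a graded module. -/
def GMod.Deg (gm : GMod G M) (d : ℕ) : Type := ↥(gm.deg d)

instance (gm : GMod G M) (d : ℕ) : AddCommGroup (gm.Deg d) :=
  inferInstanceAs (AddCommGroup ↥(gm.deg d))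

instance (gm : GMod G M) (d : ℕ) : Module R (gm.Deg d) where
  smul r x := ⟨G.emb r • x.1, by
    have := gm.smul_mem (G.emb_mem r) x.2; rwa [zero_add] at this⟩
  one_smul x := Subtype.ext (by show G.emb 1 • x.1 = x.1; rw [map_one, one_smul])
  mul_smul r s x := Subtype.ext (by
    show G.emb (r * s) • x.1 = G.emb r • (G.emb s • x.1); rw [map_mul, mul_smul])
  smul_zero r := Subtype.ext (by show G.emb r • (0 : M) = 0; rw [smul_zero])
  smul_add r x y := Subtype.ext (by
    show G.emb r • (x.1 + y.1) = G.emb r • x.1 + G.emb r • y.1; rw [smul_add])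
  add_smul r s x := Subtype.ext (by
    show G.emb (r + s) • x.1 = G.emb r • x.1 + G.emb s • x.1; rw [map_add, add_smul])
  zero_smul x := Subtype.ext (by show G.emb 0 • x.1 = 0; rw [map_zero, zero_smul])

@[simp] theorem GMod.degL_smul (gm : GMod G M) (d : ℕ) (r : R) (x : gm.Deg d) :
    (r • x).1 = G.emb r • x.1 := rfl

/-- The action maps of a graded module, on components. -/
def GMod.degAct (gm : GMod G M) (p d : ℕ) :
    TensorR R (G.Deg p) (gm.Deg d) →+ gm.Deg (p + d) :=
  liftT₂ (fun x y => (⟨x.1 • y.1, gm.smul_mem x.2 y.2⟩ : gm.Deg (p + d)))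
    (fun x x' y => Subtype.ext (add_smul x.1 x'.1 y.1))
    (fun x y y' => Subtype.ext (smul_add x.1 y.1 y'.1))
    (fun r x y => Subtype.ext (mul_smul x.1 (G.emb r) y.1))

/-- The bar-complex data of a connected graded ring, with coefficients in a
compatibly graded module. -/
def GMod.barData (gm : GMod G M) : BarData R where
  A := G.Deg
  N := gm.Deg
  μ := G.degMul
  μ_lsmul := G.degMul_lsmul
  μ_rsmul := G.degMul_rsmul
  σ := gm.degAct
  σ_lsmul p d r z := by
    induction z using TensorR.ind with
    | h0 => simp
    | htp x y =>
        rw [lsm_tp]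
        exact Subtype.ext (mul_smul (G.emb r) x.1 y.1)
    | hadd u v hu hv => rw [smul_add, map_add, hu, hv, map_add, smul_add]

end BarOfGRing

section TrivialCoefficients

variable (R : Type) [Ring R]

/-- `R`, viewed as a graded module concentrated in degree `0`. -/
@[reducible] def TrivN : ℕ → Type
  | 0 => R
  | _ + 1 => PUnit

instance : ∀ d, AddCommGroup (TrivN R d)
  | 0 => inferInstanceAs (AddCommGroup R)
  | _ + 1 => inferInstanceAs (AddCommGroup PUnit)

instance : ∀ d, Module R (TrivN R d)
  | 0 => inferInstanceAs (Module R R)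
  | _ + 1 => inferInstanceAs (Module R PUnit)

instance : ∀ d, Subsingleton (TrivN R (d + 1)) :=
  fun _ => inferInstanceAs (Subsingleton PUnit)

variable {R} {A : Type} [Ring A]

/-- The action of a connected graded ring on the trivial module `R = A/A₊`:
`A₊` acts by zero and `A_0 = R` by multiplication. -/
def GRing.trivAct (G : GRing R A) : ∀ p d, TensorR R (G.Deg p) (TrivN R d) →+ TrivN R (p + d)
  | 0, 0 =>
      liftT₂ (fun a x => G.aug a.1 * x)
        (fun a a' x => by
          show G.aug ((a + a').1) * x = G.aug a.1 * x + G.aug a'.1 * x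
          have h : (a + a').1 = a.1 + a'.1 := rfl
          rw [h, map_add, add_mul])
        (fun a x x' => by
          show G.aug a.1 * (x + x') = G.aug a.1 * x + G.aug a.1 * x'
          rw [mul_add])
        (fun r a x => by
          show G.aug ((op r • a).1) * x = G.aug a.1 * (r * x)
          have h : (op r • a).1 = a.1 * G.emb r := rfl
          rw [h, map_mul, G.aug_emb, mul_assoc])
  | _ + 1, 0 => 0
  | _, _ + 1 => 0

/-- The bar-complex data computing `Tor^A(R, R)`. -/
def GRing.trivBarData (G : GRing R A) : BarData R where
  A := G.Deg
  N := TrivN R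
  μ := G.degMul
  μ_lsmul := G.degMul_lsmul
  μ_rsmul := G.degMul_rsmul
  σ := G.trivAct
  σ_lsmul p d r z := by
    match p, d with
    | 0, 0 =>
        induction z using TensorR.ind with
        | h0 => simp
        | htp a x =>
            show G.aug ((r • a).1) * x = r • (G.aug a.1 * x)
            have h : (r • a).1 = G.emb r * a.1 := rfl
            rw [h, map_mul, G.aug_emb, smul_eq_mul, mul_assoc]
        | hadd u v hu hv => rw [smul_add, map_add, hu, hv, map_add, smul_add]
    | p + 1, 0 => exact Subsingleton.elim _ _
    | p, d + 1 => exact Subsingleton.elim _ _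

/-- The bigraded Tor groups `Tor^A_{n,m}(R, R)` of a connected graded `R`-ring. -/
def GRing.TorRR (G : GRing R A) (n m : ℕ) : Type := Tor G.trivBarData n m

instance (G : GRing R A) (n m : ℕ) : AddCommGroup (G.TorRR n m) :=
  inferInstanceAs (AddCommGroup (Tor G.trivBarData n m))

/-- The bigraded Tor groups `Tor^A_{n,m}(R, M)` with coefficients in a graded module. -/
def GMod.TorR {G : GRing R A} {M : Type} [AddCommGroup M] [Module A M]
    (gm : GMod G M) (n m : ℕ) : Type := Tor gm.barData n m

instance {G : GRing R A} {M : Type} [AddCommGroup M] [Module A M]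
    (gm : GMod G M) (n m : ℕ) : AddCommGroup (gm.TorR n m) :=
  inferInstanceAs (AddCommGroup (Tor gm.barData n m))

end TrivialCoefficients

section Posets

variable (k : Type) [Field k] (P : Type) [PartialOrder P]

/-- `ρ` is a length function for the graded poset `P`: every interval `[x, y]`
contains a maximal chain (a saturated chain for the covering relation `⋖`), and
every maximal chain from `x` to `y` has the same length `ρ x y`. -/
structure LengthFn {P : Type} [PartialOrder P] (ρ : P → P → ℕ) : Prop where
  exists_chain : ∀ x y : P, x ≤ y → ∃ c : List P,
    c.Chain' (· ⋖ ·) ∧ c.head? = some x ∧ c.getLast? = some y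
  chain_length : ∀ (x y : P) (c : List P),
    c.Chain' (· ⋖ ·) → c.head? = some x → c.getLast? = some y →
    c.length = ρ x y + 1

/-- `A`, together with the family `e`, is (a copy of) the incidence algebra of the
finite poset `P` over the field `k`: the elements `e x y`, for `x ≤ y`, form a
`k`-basis of `A` and multiply by `e x y * e z w = δ_{y z} · e x w`; the identity
is `∑ₓ e x x`. -/
structure IncAlg [Fintype P] [DecidableEq P] (A : Type) [Ring A] [Algebra k A] where
  e : P → P → A
  e_not_le : ∀ x y : P, ¬ x ≤ y → e x y = 0
  e_mul : ∀ x y z w : P, x ≤ y → z ≤ w →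
    e x y * e z w = if y = z then e x w else 0
  indep : LinearIndependent k (fun p : {p : P × P // p.1 ≤ p.2} => e p.1.1 p.1.2)
  span_top : Submodule.span k
    (Set.range (fun p : {p : P × P // p.1 ≤ p.2} => e p.1.1 p.1.2)) = ⊤
  one_def : (1 : A) = ∑ x : P, e x x

variable {k P}

/-- The canonical structure of connected graded `R`-ring (`R = k^P`) on the
incidence algebra of a finite graded poset: `e x y` is homogeneous of degree
`l([x,y]) = ρ x y`, the degree-zero part is `R` embedded diagonally, and the
augmentation kills all `e x y` with `x ≠ y`. -/
structure IncGrading [Fintype P] [DecidableEq P] {A : Type} [Ring A] [Algebra k A]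
    (inc : IncAlg k P A) (ρ : P → P → ℕ) (G : GRing (P → k) A) : Prop where
  emb_eq : ∀ f : P → k, G.emb f = ∑ x : P, f x • inc.e x x
  deg_eq : ∀ d : ℕ, (G.deg d : Set A) =
    ↑(Submodule.span k {a : A | ∃ x y : P, x ≤ y ∧ ρ x y = d ∧ a = inc.e x y})
  aug_eq : ∀ x y : P, x ≤ y →
    G.aug (inc.e x y) = if x = y then Pi.single x (1 : k) else 0

end Posets

theorem eq_pred_add_one_of_one_le {q : List ℕ × ℕ} (h : 1 ≤ q.2) : q = (q.1, q.2 - 1 + 1) :=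
  Prod.ext rfl (by omega)

theorem le_mIdx_snd (i : ℕ) : ∀ (l : List ℕ) (d : ℕ), d ≤ (mIdx l d i).2 := by
  induction i with
  | zero => rintro (_ | ⟨a, _ | ⟨b, l⟩⟩) d <;> simp
  | succ i ih =>
    rintro (_ | ⟨a, _ | ⟨b, l⟩⟩) d
    · exact le_refl _
    · simp
    · exact ih (b :: l) d

theorem mIdx_eq_pred_add_one (l : List ℕ) {d : ℕ} (i : ℕ) (hd : 1 ≤ d) :
    mIdx l d i = ((mIdx l d i).1, (mIdx l d i).2 - 1 + 1) :=
  eq_pred_add_one_of_one_le (hd.trans (le_mIdx_snd i l d))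

theorem mIdx_snd_of_succ_lt (i : ℕ) : ∀ (l : List ℕ) (d : ℕ),
    i + 1 < l.length → (mIdx l d i).2 = d := by
  induction i with
  | zero => rintro (_ | ⟨a, _ | ⟨b, l⟩⟩) d h <;> simp_all
  | succ i ih =>
    rintro (_ | ⟨a, _ | ⟨b, l⟩⟩) d h
    · simp at h
    · simp at h
    · exact ih (b :: l) d (by simp only [List.length_cons] at h ⊢; omega)

theorem mIdx_append_singleton_length (c : ℕ) :
    ∀ l : List ℕ, mIdx (l ++ [c]) 1 l.length = (l, c + 1)
  | [] => rfl
  | [_] => rfl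
  | a :: b :: l => by
    have ih := mIdx_append_singleton_length c (b :: l)
    simp only [List.cons_append, List.length_cons] at ih ⊢
    simp only [mIdx_consₛ, ih]

theorem mIdx_append_singleton_of_lt (c : ℕ) : ∀ (l : List ℕ) (i : ℕ), i < l.length →
    mIdx (l ++ [c]) 1 i = ((mIdx l (c + 1) i).1 ++ [(mIdx l (c + 1) i).2 - 1], 1)
  | [], _, hi => absurd hi (Nat.not_lt_zero _)
  | [a], 0, _ => by simp [show a + (c + 1) - 1 = a + c by omega]
  | a :: b :: l, 0, _ => rfl
  | [_], _ + 1, hi => by simp at hi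
  | a :: b :: l, i + 1, hi => by
    have ih := mIdx_append_singleton_of_lt c (b :: l) i (by simpa using hi)
    simp only [List.cons_append] at ih ⊢
    simp only [mIdx_consₛ, ih, List.cons_append]

section

variable {R M N : Type} [Ring R] [AddCommGroup M] [AddCommGroup N] [Module Rᵐᵒᵖ M]
  [Module R M] [SMulCommClass R Rᵐᵒᵖ M] [Module R N]

def tpRightL (n : N) : M →ₗ[R] TensorR R M N where
  toFun m := tp m n
  map_add' m m' := tp_add_left m m' n
  map_smul' r m := (lsm_tp r m n).symm

end

section BarData

variable {R : Type} [Ring R] (B : BarData R)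

theorem dBar_of (n m : ℕ) (p : BIdx (n + 1) m) (x : Chain B p.1.1 p.1.2) :
    dBar B n m (DirectSum.of (fun q : BIdx (n + 1) m => Chain B q.1.1 q.1.2) p x)
      = ∑ i ∈ Finset.range (n + 1), (-1 : ℤ) ^ i •
          DirectSum.of (fun q : BIdx n m => Chain B q.1.1 q.1.2) (mBIdx n m p i)
            (mMap B p.1.1 p.1.2 i x) := by
  unfold dBar
  erw [DirectSum.toAddMonoid_of, AddMonoidHom.finsetSum_apply]
  rfl

/-- `Chain B` as a family over pairs, so that `fcast` can transport along index equalities. -/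
abbrev ChainAt (q : List ℕ × ℕ) : Type := Chain B q.1 q.2

variable {B}

theorem of_eq_of_fcast {n m : ℕ} {p q : BIdx n m} (h : p.1 = q.1)
    {x : Chain B p.1.1 p.1.2} {y : Chain B q.1.1 q.1.2} (hxy : fcast (ChainAt B) h x = y) :
    DirectSum.of (fun r : BIdx n m => Chain B r.1.1 r.1.2) p x
      = DirectSum.of (fun r : BIdx n m => Chain B r.1.1 r.1.2) q y := by
  obtain rfl : p = q := Subtype.ext h
  rw [← hxy]
  rfl

theorem fcast_tp {a : ℕ} {l l' : List ℕ} {d d' : ℕ}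
    (h : ((l, d) : List ℕ × ℕ) = (l', d'))
    (h' : ((a :: l, d) : List ℕ × ℕ) = (a :: l', d')) (x : B.A a) (y : ChainAt B (l, d)) :
    fcast (ChainAt B) h' (tp (R := R) x y) = tp x (fcast (ChainAt B) h y) := by
  obtain ⟨rfl, rfl⟩ := Prod.ext_iff.mp h
  rfl

theorem mh_lmapL (a b : ℕ) {X Y : Type} [AddCommGroup X] [Module R X]
    [AddCommGroup Y] [Module R Y] (g : X →ₗ[R] Y)
    (w : TensorR R (B.A a) (TensorR R (B.A b) X)) :
    mh a b Y (lmapL (lmapL g) w) = lmapL g (mh a b X w) := by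
  induction w using TensorR.ind with
  | h0 => simp only [map_zero]
  | hadd u v hu hv => simp only [map_add, hu, hv]
  | htp x y =>
    induction y using TensorR.ind with
    | h0 => simp only [tp_zero_right, map_zero]
    | hadd u v hu hv => simp only [tp_add_right, map_add, hu, hv]
    | htp y z => rfl

theorem chain_eq_zero_of_deg_zero [Subsingleton (B.N 0)] :
    ∀ (l : List ℕ) (x : Chain B l 0), x = 0
  | [], x => Subsingleton.elim (α := B.N 0) x 0
  | _ :: l, x => by
    induction x using TensorR.ind with
    | h0 => rfl
    | htp y z => rw [chain_eq_zero_of_deg_zero l z]; exact tp_zero_right _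
    | hadd u v hu hv => rw [hu, hv]; exact add_zero _

end BarData

section InducedFromDegOne

variable {R : Type} [Ring R]

/-- Inverses `N_{c+1} ≅ A_c ⊗_R N_1` of the action maps, compatible with the `A`-action: the
coefficients are induced from their degree-one part. -/
structure BarData.InducedFromDegOne (B : BarData R) where
  split : ∀ c, B.N (c + 1) →ₗ[R] TensorR R (B.A c) (B.N 1)
  act_split : ∀ c w, B.σ c 1 (split c w) = w
  split_act : ∀ c x, split c (B.σ c 1 x) = x
  split_act_tp : ∀ a c (x : B.A a) (w : B.N (c + 1)),
    split (a + c) (B.σ a (c + 1) (tp x w)) = mh (B := B) a c (B.N 1) (tp x (split c w))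

def BIdx.splitCoeff {n m : ℕ} (p : BIdx n m) (h : 2 ≤ p.1.2) : BIdx (n + 1) m :=
  ⟨(p.1.1 ++ [p.1.2 - 1], 1), by
    obtain ⟨h1, h2, h3⟩ := p.2
    refine ⟨by simp [h1], by simp only [List.sum_append, List.sum_singleton]; omega, ?_⟩
    intro a ha
    rcases List.mem_append.mp ha with ha | ha
    · exact h3 a ha
    · rw [List.mem_singleton] at ha; omega⟩

namespace BarData.InducedFromDegOne

variable {B : BarData R} (D : B.InducedFromDegOne)

def chainHomotopy :
    (l : List ℕ) → (c : ℕ) → Chain B l (c + 1) →ₗ[R] Chain B (l ++ [c]) 1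
  | [], c => D.split c
  | _ :: l, c => lmapL (chainHomotopy l c)

theorem mMap_chainHomotopy_last (c : ℕ) : ∀ (l : List ℕ) (x : Chain B l (c + 1)),
    fcast (ChainAt B) (mIdx_append_singleton_length c l)
      (mMap B (l ++ [c]) 1 l.length (D.chainHomotopy l c x)) = x
  | [], x => D.act_split c x
  | [a], x => by
    induction x using TensorR.ind with
    | h0 => erw [map_zero]; rfl
    | hadd u v hu hv => erw [map_add, map_add, map_add]; rw [hu, hv]; rfl
    | htp y z => exact congrArg (tp (R := R) y) (D.act_split c z)
  | a :: b :: l, x => by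
    induction x using TensorR.ind with
    | h0 => erw [map_zero]; rfl
    | hadd u v hu hv => erw [map_add, map_add, map_add]; rw [hu, hv]; rfl
    | htp y z =>
      exact (fcast_tp (mIdx_append_singleton_length c (b :: l))
          (mIdx_append_singleton_length c (a :: b :: l)) y _).trans
        (congrArg (tp (R := R) y) (mMap_chainHomotopy_last c (b :: l) z))

theorem chainHomotopy_mMap_last (g : ℕ) : ∀ (l : List ℕ) (y : Chain B (l ++ [g]) 1),
    D.chainHomotopy l g (fcast (ChainAt B) (mIdx_append_singleton_length g l)
      (mMap B (l ++ [g]) 1 l.length y)) = y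
  | [], y => D.split_act g y
  | [a], y => by
    induction y using TensorR.ind with
    | h0 => erw [map_zero]; rfl
    | hadd u v hu hv => erw [map_add, map_add]; exact congrArg₂ (· + ·) hu hv
    | htp x z => exact congrArg (tp (R := R) x) (D.split_act g z)
  | a :: b :: l, y => by
    induction y using TensorR.ind with
    | h0 => erw [map_zero, map_zero]; rfl
    | hadd u v hu hv => erw [map_add, map_add, map_add]; rw [hu, hv]; rfl
    | htp x z =>
      exact (congrArg (lmapL (D.chainHomotopy (b :: l) g))
          (fcast_tp (mIdx_append_singleton_length g (b :: l))
            (mIdx_append_singleton_length g (a :: b :: l)) x _)).trans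
        (congrArg (tp (R := R) x) (chainHomotopy_mMap_last g (b :: l) z))

theorem mMap_chainHomotopy_of_lt (c : ℕ) : ∀ (l : List ℕ) (i : ℕ) (hi : i < l.length)
    (x : Chain B l (c + 1)),
    fcast (ChainAt B) (mIdx_append_singleton_of_lt c l i hi)
        (mMap B (l ++ [c]) 1 i (D.chainHomotopy l c x))
      = D.chainHomotopy (mIdx l (c + 1) i).1 ((mIdx l (c + 1) i).2 - 1)
          (fcast (ChainAt B) (mIdx_eq_pred_add_one l i (Nat.le_add_left 1 c))
            (mMap B l (c + 1) i x))
  | [], _, hi, _ => absurd hi (Nat.not_lt_zero _)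
  | [a], 0, _, x => by
    induction x using TensorR.ind with
    | h0 => erw [map_zero, map_zero, map_zero]
    | hadd u v hu hv => erw [map_add, map_add, map_add, map_add, map_add]; rw [hu, hv]; rfl
    | htp y w => exact (D.split_act_tp a c y w).symm
  | a :: b :: l, 0, _, x => mh_lmapL a b (D.chainHomotopy l c) x
  | [_], _ + 1, hi, _ => by simp at hi
  | a :: b :: l, i + 1, hi, x => by
    have hi' : i < (b :: l).length := by simpa using hi
    induction x using TensorR.ind with
    | h0 => erw [map_zero, map_zero, map_zero]
    | hadd u v hu hv =>
      erw [map_add, map_add, map_add, map_add, map_add, map_add]; rw [hu, hv]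
    | htp y z =>
      have e1 := fcast_tp (mIdx_append_singleton_of_lt c (b :: l) i hi')
        (mIdx_append_singleton_of_lt c (a :: b :: l) (i + 1) hi) y
        (mMap B ((b :: l) ++ [c]) 1 i (D.chainHomotopy (b :: l) c z))
      have e2 := congrArg (tp (R := R) y) (mMap_chainHomotopy_of_lt c (b :: l) i hi' z)
      have e3 := fcast_tp (mIdx_eq_pred_add_one (b :: l) i (Nat.le_add_left 1 c))
        (mIdx_eq_pred_add_one (a :: b :: l) (i + 1) (Nat.le_add_left 1 c)) y
        (mMap B (b :: l) (c + 1) i z)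
      exact (e1.trans e2).trans (congrArg (lmapL (D.chainHomotopy (mIdx (b :: l) (c + 1) i).1
        ((mIdx (b :: l) (c + 1) i).2 - 1))) e3).symm

/-- Zero on coefficient degree `1`: the normalized complex has no factor `A_0`. -/
def homotopy (n m : ℕ) : Bar B n m →+ Bar B (n + 1) m :=
  DirectSum.toAddMonoid fun p =>
    if h : 2 ≤ p.1.2 then
      (-1 : ℤ) ^ n •
        ((DirectSum.of (fun q : BIdx (n + 1) m => Chain B q.1.1 q.1.2) (p.splitCoeff h)).comp
          ((D.chainHomotopy p.1.1 (p.1.2 - 1)).toAddMonoidHom.comp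
            (fcast (ChainAt B) (eq_pred_add_one_of_one_le (one_le_two.trans h))).toAddMonoidHom))
    else 0

theorem homotopy_of {n m : ℕ} (p : BIdx n m) (h : 2 ≤ p.1.2) (x : Chain B p.1.1 p.1.2) :
    D.homotopy n m (DirectSum.of (fun q : BIdx n m => Chain B q.1.1 q.1.2) p x)
      = (-1 : ℤ) ^ n •
        DirectSum.of (fun q : BIdx (n + 1) m => Chain B q.1.1 q.1.2) (p.splitCoeff h)
          (D.chainHomotopy p.1.1 (p.1.2 - 1)
            (fcast (ChainAt B) (eq_pred_add_one_of_one_le (one_le_two.trans h)) x)) := by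
  unfold homotopy
  erw [DirectSum.toAddMonoid_of, dif_pos h]
  rfl

theorem homotopy_of_lt_two {n m : ℕ} (p : BIdx n m) (h : p.1.2 < 2)
    (x : Chain B p.1.1 p.1.2) :
    D.homotopy n m (DirectSum.of (fun q : BIdx n m => Chain B q.1.1 q.1.2) p x) = 0 := by
  unfold homotopy
  erw [DirectSum.toAddMonoid_of, dif_neg (by omega)]
  rfl

theorem chainHomotopy_fcast {q : List ℕ × ℕ} {l : List ℕ} {g : ℕ} (hq : q = (l, g + 1))
    (hq' : q = (q.1, q.2 - 1 + 1)) (he : ((q.1 ++ [q.2 - 1], 1) : List ℕ × ℕ) = (l ++ [g], 1))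
    (x : ChainAt B q) :
    fcast (ChainAt B) he (D.chainHomotopy q.1 (q.2 - 1) (fcast (ChainAt B) hq' x))
      = D.chainHomotopy l g (fcast (ChainAt B) hq x) := by
  subst hq
  rfl

theorem homotopy_dBar_of_coeff_eq_one {n m : ℕ} (p : BIdx (n + 1) m) (hp1 : p.1.2 = 1)
    (x : Chain B p.1.1 p.1.2) :
    D.homotopy n m (dBar B n m (DirectSum.of (fun q : BIdx (n + 1) m => Chain B q.1.1 q.1.2) p x))
      = DirectSum.of (fun q : BIdx (n + 1) m => Chain B q.1.1 q.1.2) p x := by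
  obtain ⟨⟨l, d⟩, hp⟩ := p
  obtain rfl : d = 1 := hp1
  obtain ⟨l, g, rfl⟩ : ∃ l' g, l = l' ++ [g] := by
    rcases List.eq_nil_or_concat l with h | ⟨l', g, h⟩
    · simp [h] at hp
    · exact ⟨l', g, by rw [h, List.concat_eq_append]⟩
  obtain rfl : l.length = n := by simpa using hp.1
  have hg : 1 ≤ g := Nat.one_le_iff_ne_zero.mpr (hp.2.2 g (by simp))
  erw [dBar_of, map_sum, Finset.sum_range_succ]
  have hinner : ∀ i ∈ Finset.range l.length,
      D.homotopy l.length m ((-1 : ℤ) ^ i •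
        DirectSum.of (fun q : BIdx l.length m => Chain B q.1.1 q.1.2)
          (mBIdx l.length m ⟨(l ++ [g], 1), hp⟩ i) (mMap B (l ++ [g]) 1 i x)) = 0 := by
    intro i hi
    have hsmall : (mBIdx l.length m ⟨(l ++ [g], 1), hp⟩ i).1.2 < 2 := by
      show (mIdx (l ++ [g]) 1 i).2 < 2
      rw [mIdx_snd_of_succ_lt i (l ++ [g]) 1 (by simpa using Finset.mem_range.mp hi)]
      omega
    erw [map_zsmul, D.homotopy_of_lt_two _ hsmall, smul_zero]
  rw [Finset.sum_congr rfl hinner, Finset.sum_const_zero, zero_add]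
  have hq : (mBIdx l.length m ⟨(l ++ [g], 1), hp⟩ l.length).1 = (l, g + 1) :=
    mIdx_append_singleton_length g l
  have hq2 : 2 ≤ (mBIdx l.length m ⟨(l ++ [g], 1), hp⟩ l.length).1.2 := by rw [hq]; omega
  erw [map_zsmul, D.homotopy_of _ hq2, smul_smul, ← pow_add, Even.neg_one_pow ⟨l.length, rfl⟩,
    one_smul]
  have hidx : ((mBIdx l.length m ⟨(l ++ [g], 1), hp⟩ l.length).splitCoeff hq2).1
      = ((l ++ [g], 1) : List ℕ × ℕ) := by
    simp only [BIdx.splitCoeff, hq, Nat.add_sub_cancel]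
  refine of_eq_of_fcast hidx ?_
  exact (D.chainHomotopy_fcast hq _ hidx (mMap B (l ++ [g]) 1 l.length x)).trans
    (D.chainHomotopy_mMap_last g l x)

theorem homotopy_merge_of_lt {n m : ℕ} (l : List ℕ) (c : ℕ)
    (hp : l.length = n + 1 ∧ l.sum + (c + 2) = m ∧ ∀ a ∈ l, a ≠ 0)
    (i : ℕ) (hi : i < n + 1) (x : Chain B l (c + 2)) :
    DirectSum.of (fun q : BIdx (n + 1) m => Chain B q.1.1 q.1.2)
        (mBIdx (n + 1) m (BIdx.splitCoeff ⟨(l, c + 2), hp⟩ le_add_self) i)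
        (mMap B (l ++ [c + 1]) 1 i (D.chainHomotopy l (c + 1) x))
      = (-1 : ℤ) ^ n • D.homotopy n m
          (DirectSum.of (fun q : BIdx n m => Chain B q.1.1 q.1.2) (mBIdx n m ⟨(l, c + 2), hp⟩ i)
            (mMap B l (c + 2) i x)) := by
  have hi' : i < l.length := hp.1 ▸ hi
  have hs : 2 ≤ (mBIdx n m ⟨(l, c + 2), hp⟩ i).1.2 :=
    le_add_self.trans (le_mIdx_snd i l (c + 2))
  erw [D.homotopy_of _ hs, smul_smul, ← pow_add, Even.neg_one_pow ⟨n, rfl⟩, one_smul]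
  exact of_eq_of_fcast (mIdx_append_singleton_of_lt (c + 1) l i hi')
    (D.mMap_chainHomotopy_of_lt (c + 1) l i hi' x)

theorem dBar_homotopy_add_homotopy_dBar_of_two_le {n m : ℕ} (p : BIdx (n + 1) m)
    (h : 2 ≤ p.1.2) (x : Chain B p.1.1 p.1.2) :
    dBar B (n + 1) m
        (D.homotopy (n + 1) m (DirectSum.of (fun q : BIdx (n + 1) m => Chain B q.1.1 q.1.2) p x))
      + D.homotopy n m
          (dBar B n m (DirectSum.of (fun q : BIdx (n + 1) m => Chain B q.1.1 q.1.2) p x))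
      = DirectSum.of (fun q : BIdx (n + 1) m => Chain B q.1.1 q.1.2) p x := by
  obtain ⟨⟨l, d⟩, hp⟩ := p
  obtain ⟨c, rfl⟩ : ∃ c, d = c + 2 := ⟨d - 2, by change 2 ≤ d at h; omega⟩
  have hl : l.length = n + 1 := hp.1
  rw [D.homotopy_of ⟨(l, c + 2), hp⟩ h]
  erw [map_zsmul, dBar_of, Finset.smul_sum (N := Bar B (n + 1) m), dBar_of, map_sum,
    Finset.sum_range_succ]
  have hcancel : ∀ i ∈ Finset.range (n + 1),
      (-1 : ℤ) ^ (n + 1) • ((-1 : ℤ) ^ i •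
        DirectSum.of (fun q : BIdx (n + 1) m => Chain B q.1.1 q.1.2)
          (mBIdx (n + 1) m (BIdx.splitCoeff ⟨(l, c + 2), hp⟩ h) i)
          (mMap B (l ++ [c + 1]) 1 i (D.chainHomotopy l (c + 1) x)))
      = - D.homotopy n m ((-1 : ℤ) ^ i •
          DirectSum.of (fun q : BIdx n m => Chain B q.1.1 q.1.2) (mBIdx n m ⟨(l, c + 2), hp⟩ i)
            (mMap B l (c + 2) i x)) := by
    intro i hi
    rw [D.homotopy_merge_of_lt l c hp i (Finset.mem_range.mp hi) x]
    erw [map_zsmul]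
    have hsign : ∀ y : Bar B (n + 1) m,
        (-1 : ℤ) ^ (n + 1) • (-1 : ℤ) ^ i • (-1 : ℤ) ^ n • y
          = -((-1 : ℤ) ^ i • y) := by
      intro y
      have hsq : (-1 : ℤ) ^ n * (-1) ^ n = 1 := by rw [← pow_add, Even.neg_one_pow ⟨n, rfl⟩]
      rw [smul_smul, smul_smul, ← neg_smul]
      congr 1
      linear_combination (-(-1 : ℤ) ^ i) * hsq
    exact hsign _
  erw [Finset.sum_congr rfl hcancel, Finset.sum_neg_distrib, add_right_comm, neg_add_cancel,
    zero_add, smul_smul, ← pow_add, Even.neg_one_pow ⟨n + 1, rfl⟩, one_smul]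
  have hlast : ∀ i, i = l.length →
      DirectSum.of (fun q : BIdx (n + 1) m => Chain B q.1.1 q.1.2)
          (mBIdx (n + 1) m (BIdx.splitCoeff ⟨(l, c + 2), hp⟩ h) i)
          (mMap B (l ++ [c + 1]) 1 i (D.chainHomotopy l (c + 1) x))
        = DirectSum.of (fun q : BIdx (n + 1) m => Chain B q.1.1 q.1.2) ⟨(l, c + 2), hp⟩ x := by
    rintro i rfl
    exact of_eq_of_fcast (mIdx_append_singleton_length (c + 1) l)
      (D.mMap_chainHomotopy_last (c + 1) l x)
  exact hlast (n + 1) hl.symm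

theorem dBar_homotopy_add_homotopy_dBar_of [Subsingleton (B.N 0)] {n m : ℕ}
    (p : BIdx (n + 1) m) (x : Chain B p.1.1 p.1.2) :
    dBar B (n + 1) m
        (D.homotopy (n + 1) m (DirectSum.of (fun q : BIdx (n + 1) m => Chain B q.1.1 q.1.2) p x))
      + D.homotopy n m
          (dBar B n m (DirectSum.of (fun q : BIdx (n + 1) m => Chain B q.1.1 q.1.2) p x))
      = DirectSum.of (fun q : BIdx (n + 1) m => Chain B q.1.1 q.1.2) p x := by
  obtain ⟨⟨l, _ | _ | d⟩, hp⟩ := p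
  · rw [chain_eq_zero_of_deg_zero l x]
    erw [map_zero, map_zero]; exact add_zero 0
  · erw [D.homotopy_of_lt_two ⟨(l, 1), hp⟩ one_lt_two, map_zero, zero_add]
    exact D.homotopy_dBar_of_coeff_eq_one _ rfl x
  · exact D.dBar_homotopy_add_homotopy_dBar_of_two_le _ le_add_self x

theorem dBar_comp_homotopy_add_homotopy_comp_dBar [Subsingleton (B.N 0)] (n m : ℕ) :
    (dBar B (n + 1) m).comp (D.homotopy (n + 1) m) + (D.homotopy n m).comp (dBar B n m)
      = AddMonoidHom.id (Bar B (n + 1) m) :=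
  DirectSum.addHom_ext fun p x => D.dBar_homotopy_add_homotopy_dBar_of p x

theorem dBar_comp_homotopy_of_ne_one [Subsingleton (B.N 0)] {m : ℕ} (hm : m ≠ 1) :
    (dBar B 0 m).comp (D.homotopy 0 m) = AddMonoidHom.id (Bar B 0 m) := by
  refine DirectSum.addHom_ext fun p x => ?_
  obtain ⟨⟨l, d⟩, hp⟩ := p
  obtain rfl : l = [] := List.length_eq_zero_iff.mp hp.1
  obtain rfl : d = m := by simpa using hp.2.1
  obtain _ | _ | c := d
  · rw [chain_eq_zero_of_deg_zero [] x]
    erw [map_zero, map_zero]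
    rfl
  · exact absurd rfl hm
  · erw [AddMonoidHom.comp_apply, D.homotopy_of _ le_add_self, map_zsmul, dBar_of,
      Finset.sum_range_one, pow_zero, one_smul, one_smul]
    exact of_eq_of_fcast rfl (D.act_split (c + 1) x)

end BarData.InducedFromDegOne

namespace BarData.InducedFromDegOne

variable {B : BarData R}

theorem tor_zero_subsingleton (D : B.InducedFromDegOne) [Subsingleton (B.N 0)] {m : ℕ}
    (hm : m ≠ 1) : Subsingleton (Tor B 0 m) :=
  QuotientAddGroup.subsingleton_iff.mpr <| (AddSubgroup.eq_top_iff' _).mpr fun x =>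
    ⟨D.homotopy 0 m x, DFunLike.congr_fun (D.dBar_comp_homotopy_of_ne_one hm) x⟩

theorem tor_succ_subsingleton (D : B.InducedFromDegOne) [Subsingleton (B.N 0)] (n m : ℕ) :
    Subsingleton (Tor B (n + 1) m) :=
  QuotientAddGroup.subsingleton_iff.mpr <| (AddSubgroup.eq_top_iff' _).mpr fun x => by
    refine AddSubgroup.mem_addSubgroupOf.mpr ⟨D.homotopy (n + 1) m x, ?_⟩
    have h := DFunLike.congr_fun (D.dBar_comp_homotopy_add_homotopy_comp_dBar n m) x.1
    rwa [AddMonoidHom.add_apply, AddMonoidHom.comp_apply, AddMonoidHom.comp_apply,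
      AddMonoidHom.mem_ker.mp x.2, map_zero, add_zero] at h

theorem tor_subsingleton (D : B.InducedFromDegOne) [Subsingleton (B.N 0)] {n m : ℕ}
    (hm : m ≠ n + 1) : Subsingleton (Tor B n m) := by
  cases n with
  | zero => exact D.tor_zero_subsingleton hm
  | succ n => exact D.tor_succ_subsingleton n m

end BarData.InducedFromDegOne

end InducedFromDegOne

namespace LengthFn

variable {P : Type} [PartialOrder P] {ρ : P → P → ℕ}

theorem self_eq_zero (hρ : LengthFn ρ) (x : P) : ρ x x = 0 := by
  simpa using (hρ.chain_length x x [x] (List.isChain_singleton x) rfl rfl).symm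

theorem eq_of_eq_zero (hρ : LengthFn ρ) {x y : P} (hxy : x ≤ y) (h : ρ x y = 0) : x = y := by
  obtain ⟨c, hc, hhead, hlast⟩ := hρ.exists_chain x y hxy
  obtain ⟨a, rfl⟩ := List.length_eq_one_iff.mp (h ▸ hρ.chain_length x y c hc hhead hlast)
  simp_all

theorem eq_add_one_of_covBy (hρ : LengthFn ρ) {x y z : P} (hxy : x ≤ y) (hyz : y ⋖ z) :
    ρ x z = ρ x y + 1 := by
  obtain ⟨c, hc, hhead, hlast⟩ := hρ.exists_chain x y hxy
  have hc' : (c ++ [z]).IsChain (· ⋖ ·) := by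
    refine List.isChain_append.mpr ⟨hc, List.isChain_singleton z, fun a ha b hb => ?_⟩
    rw [hlast, Option.mem_some_iff] at ha
    rw [List.head?_cons, Option.mem_some_iff] at hb
    exact ha ▸ hb ▸ hyz
  have hcne : c ≠ [] := by rintro rfl; simp at hhead
  have := hρ.chain_length x z (c ++ [z]) hc'
    (by rw [List.head?_append, hhead]; rfl) List.getLast?_concat
  rw [List.length_append, List.length_singleton, hρ.chain_length x y c hc hhead hlast] at this
  omega

end LengthFn

namespace IncGrading

variable {k P A : Type} [Field k] [PartialOrder P] [Fintype P] [DecidableEq P] [Ring A]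
  [Algebra k A] {inc : IncAlg k P A} {ρ : P → P → ℕ} {G : GRing (P → k) A}

theorem emb_const (hG : IncGrading inc ρ G) (c : k) : G.emb (fun _ => c) = c • (1 : A) := by
  rw [hG.emb_eq, inc.one_def, Finset.smul_sum]

theorem emb_single (hG : IncGrading inc ρ G) (x : P) : G.emb (Pi.single x 1) = inc.e x x := by
  rw [hG.emb_eq, Finset.sum_eq_single x (fun y _ hy => by rw [Pi.single_eq_of_ne hy, zero_smul])
    (fun h => absurd (Finset.mem_univ x) h), Pi.single_eq_same, one_smul]

theorem smul_mem_deg (hG : IncGrading inc ρ G) (c : k) {d : ℕ} {a : A} (ha : a ∈ G.deg d) :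
    c • a ∈ G.deg d := by
  simpa [hG.emb_const] using G.mul_mem (G.emb_mem fun _ => c) ha

theorem const_smul_deg (hG : IncGrading inc ρ G) (c : k) {p : ℕ} (a : G.Deg p) :
    (fun _ => c : P → k) • a = op (fun _ => c : P → k) • a :=
  Subtype.ext <| by
    change G.emb (fun _ => c) * a.1 = a.1 * G.emb (fun _ => c)
    rw [hG.emb_const, smul_mul_assoc, one_mul, mul_smul_comm, mul_one]

end IncGrading

section GradedBasis

variable (k : Type) [Field k] {B V ι R : Type} [Ring B] [AddCommGroup V] [Module B V] [Module k V]
  [Ring R] {GB : GRing R B}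

def GMod.IsGradedBasis (gm : GMod GB V) (vb : ι → V) (deg : ι → ℕ) : Prop :=
  ∀ d : ℕ, (gm.deg d : Set V) = ↑(Submodule.span k {w : V | ∃ i, deg i = d ∧ w = vb i})

variable {k} {gm : GMod GB V} {vb : ι → V} {deg : ι → ℕ}

theorem GMod.IsGradedBasis.mem_deg (h : gm.IsGradedBasis k vb deg) (i : ι) :
    vb i ∈ gm.deg (deg i) := by
  rw [← SetLike.mem_coe, h]
  exact Submodule.subset_span ⟨i, rfl, rfl⟩

theorem GMod.IsGradedBasis.eq_zero_of_mem_deg (h : gm.IsGradedBasis k vb deg) {d : ℕ}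
    (hd : ∀ i, deg i ≠ d) {w : V} (hw : w ∈ gm.deg d) : w = 0 := by
  rw [← SetLike.mem_coe, h] at hw
  refine (Submodule.mem_bot k).mp (Submodule.span_le.mpr ?_ hw)
  rintro _ ⟨i, hi, -⟩
  exact absurd hi (hd i)

theorem GMod.IsGradedBasis.exists_smul_eq_of_mem_deg (h : gm.IsGradedBasis k vb deg) {d : ℕ}
    {i₀ : ι} (hd : ∀ i, deg i = d → i = i₀) {w : V} (hw : w ∈ gm.deg d) :
    ∃ c : k, c • vb i₀ = w := by
  rw [← SetLike.mem_coe, h] at hw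
  refine Submodule.mem_span_singleton.mp (Submodule.span_le.mpr ?_ hw)
  rintro _ ⟨i, hi, rfl⟩
  rw [hd i hi]
  exact Submodule.mem_span_singleton_self _

end GradedBasis

section GradedColumn

variable {k P : Type} [Field k] [PartialOrder P] {t u : P} {B V R : Type} [Ring B]
  [AddCommGroup V] [Module B V] [Module k V] [Ring R] {GB : GRing R B} {gm : GMod GB V}
  {vb : {x : P // x ≤ u} → V} {ρ : P → P → ℕ}

theorem subsingleton_deg_zero (hρ : LengthFn ρ) (hu : u ⋖ t)
    (hgm : gm.IsGradedBasis k vb (fun z => ρ z t)) : Subsingleton (gm.Deg 0) := by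
  have hpos : ∀ z : {x : P // x ≤ u}, ρ z t ≠ 0 := fun z => by
    rw [hρ.eq_add_one_of_covBy z.2 hu]
    exact Nat.succ_ne_zero _
  exact ⟨fun w w' => Subtype.ext <| by
    rw [hgm.eq_zero_of_mem_deg hpos w.2, hgm.eq_zero_of_mem_deg hpos w'.2]⟩

/-- `e_{u,t}`, the generator of `V`, in degree `l([u,t]) = 1`. -/
def genDegOne (hρ : LengthFn ρ) (hu : u ⋖ t) (hgm : gm.IsGradedBasis k vb (fun z => ρ z t)) :
    gm.Deg 1 :=
  ⟨vb ⟨u, le_rfl⟩, by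
    simpa [hρ.eq_add_one_of_covBy le_rfl hu, hρ.self_eq_zero] using hgm.mem_deg ⟨u, le_rfl⟩⟩

end GradedColumn

section IdealBasis

variable {k P : Type} [Field k] [PartialOrder P] [Fintype P] [DecidableEq P] {t u : P}
  {B : Type} [Ring B] [Algebra k B] {V : Type} [AddCommGroup V] [Module B V] [Module k V]

/-- `vb` is a `k`-basis of `V` on which `k^a[P ∖ {t}]` acts as on the basis `e_{z,t}` (`z ≤ u`)
of the left ideal `k^a[P] e_{u,t}`. -/
structure IsIdealBasis (incB : IncAlg k {x : P // x ≠ t} B) (vb : {x : P // x ≤ u} → V) :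
    Prop where
  indep : LinearIndependent k vb
  span_eq_top : Submodule.span k (Set.range vb) = ⊤
  e_smul : ∀ (x y : {x : P // x ≠ t}) (h : x ≤ y) (z : {x : P // x ≤ u}),
    incB.e x y • vb z =
      if hyz : (↑y : P) = ↑z then
        vb ⟨↑x, (Subtype.coe_le_coe.mpr h).trans ((le_of_eq hyz).trans z.2)⟩
      else 0

def lowerToCompl (hut : u < t) (z : {x : P // x ≤ u}) : {x : P // x ≠ t} :=
  ⟨z, (z.2.trans_lt hut).ne⟩

namespace IsIdealBasis

variable {incB : IncAlg k {x : P // x ≠ t} B} {vb : {x : P // x ≤ u} → V}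
  (hV : IsIdealBasis incB vb) (hut : u < t)

/-- Right multiplication by `e_{t,u}`: `e_{z,t} ↦ e_{z,u}`. -/
def split : V →ₗ[k] B :=
  (Module.Basis.mk hV.indep hV.span_eq_top.ge).constr k fun z =>
    incB.e (lowerToCompl hut z) (lowerToCompl hut ⟨u, le_rfl⟩)

theorem split_vb (z : {x : P // x ≤ u}) :
    hV.split hut (vb z) = incB.e (lowerToCompl hut z) (lowerToCompl hut ⟨u, le_rfl⟩) := by
  rw [split, ← Module.Basis.mk_apply hV.indep hV.span_eq_top.ge z, Module.Basis.constr_basis]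

theorem split_e_smul_vb (x y : {x : P // x ≠ t}) (hxy : x ≤ y) (z : {x : P // x ≤ u}) :
    hV.split hut (incB.e x y • vb z) = incB.e x y * hV.split hut (vb z) := by
  rw [hV.e_smul x y hxy z, hV.split_vb, incB.e_mul x y _ _ hxy z.2]
  by_cases hyz : (y : P) = z
  · rw [dif_pos hyz, if_pos (Subtype.ext hyz), hV.split_vb]
    rfl
  · rw [dif_neg hyz, if_neg (fun h => hyz (congrArg Subtype.val h)), map_zero]

theorem split_smul [IsScalarTower k B V] (a : B) (w : V) :
    hV.split hut (a • w) = a * hV.split hut w := by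
  have hw : w ∈ Submodule.span k (Set.range vb) := hV.span_eq_top ▸ Submodule.mem_top
  have ha := incB.span_top ▸ Submodule.mem_top (x := a)
  induction ha using Submodule.span_induction with
  | mem _ hx =>
    obtain ⟨⟨⟨x, y⟩, hxy⟩, rfl⟩ := hx
    induction hw using Submodule.span_induction with
    | mem _ hz =>
      obtain ⟨z, rfl⟩ := hz
      exact hV.split_e_smul_vb hut x y hxy z
    | zero => rw [smul_zero, map_zero, mul_zero]
    | add w w' _ _ h h' => rw [smul_add, map_add, map_add, h, h', mul_add]
    | smul c w _ h => rw [smul_comm, map_smul, h, map_smul, mul_smul_comm]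
  | zero => rw [zero_smul, map_zero, zero_mul]
  | add a a' _ _ h h' => rw [add_smul, map_add, h, h', add_mul]
  | smul c a _ h => rw [smul_assoc, map_smul, h, smul_mul_assoc]

theorem split_smul_vb_self [IsScalarTower k B V] (w : V) :
    hV.split hut w • vb ⟨u, le_rfl⟩ = w := by
  have hw : w ∈ Submodule.span k (Set.range vb) := hV.span_eq_top ▸ Submodule.mem_top
  induction hw using Submodule.span_induction with
  | mem _ hz =>
    obtain ⟨z, rfl⟩ := hz
    rw [hV.split_vb, hV.e_smul _ _ z.2]
    exact dif_pos rfl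
  | zero => rw [map_zero, zero_smul]
  | add w w' _ _ h h' => rw [map_add, add_smul, h, h']
  | smul c w _ h => rw [map_smul, smul_assoc, h]

end IsIdealBasis

section Graded

variable {incB : IncAlg k {x : P // x ≠ t} B} {vb : {x : P // x ≤ u} → V}
  {ρ : P → P → ℕ} {GB : GRing ({x : P // x ≠ t} → k) B} {gm : GMod GB V}

theorem IsIdealBasis.split_mem_deg (hV : IsIdealBasis incB vb) (hρ : LengthFn ρ) (hu : u ⋖ t)
    (hGB : IncGrading incB (fun x y : {x : P // x ≠ t} => ρ ↑x ↑y) GB)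
    (hgm : gm.IsGradedBasis k vb (fun z => ρ z t)) {d : ℕ} {w : V} (hw : w ∈ gm.deg (d + 1)) :
    hV.split hu.lt w ∈ GB.deg d := by
  rw [← SetLike.mem_coe, hgm] at hw
  induction hw using Submodule.span_induction with
  | mem _ hz =>
    obtain ⟨z, hz : ρ z t = d + 1, rfl⟩ := hz
    rw [hV.split_vb, ← SetLike.mem_coe, hGB.deg_eq]
    refine Submodule.subset_span ⟨_, _, z.2, ?_, rfl⟩
    have := hρ.eq_add_one_of_covBy z.2 hu
    simp only [lowerToCompl]
    omega
  | zero => rw [map_zero]; exact zero_mem _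
  | add w w' _ _ h h' => rw [map_add]; exact add_mem h h'
  | smul c w _ h => rw [map_smul]; exact hGB.smul_mem_deg c h

variable [IsScalarTower k B V]

theorem exists_const_smul_genDegOne
    (hGB : IncGrading incB (fun x y : {x : P // x ≠ t} => ρ ↑x ↑y) GB) (hρ : LengthFn ρ)
    (hu : u ⋖ t) (hgm : gm.IsGradedBasis k vb (fun z => ρ z t)) (w : gm.Deg 1) :
    ∃ c : k, (fun _ => c : {x : P // x ≠ t} → k) • genDegOne hρ hu hgm = w := by
  have hu₀ : ∀ z : {x : P // x ≤ u}, ρ z t = 1 → z = ⟨u, le_rfl⟩ := fun z hz => by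
    have := hρ.eq_add_one_of_covBy z.2 hu
    exact Subtype.ext (hρ.eq_of_eq_zero (y := u) z.2 (by omega))
  obtain ⟨c, hc⟩ := hgm.exists_smul_eq_of_mem_deg hu₀ w.2
  refine ⟨c, Subtype.ext ?_⟩
  change GB.emb (fun _ => c) • vb ⟨u, le_rfl⟩ = w.1
  rw [hGB.emb_const, smul_one_smul, hc]

namespace IsIdealBasis

variable (hV : IsIdealBasis incB vb) (hρ : LengthFn ρ) (hu : u ⋖ t)
  (hGB : IncGrading incB (fun x y : {x : P // x ≠ t} => ρ ↑x ↑y) GB)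
  (hgm : gm.IsGradedBasis k vb (fun z => ρ z t))

def degSplit (c : ℕ) : gm.Deg (c + 1) →ₗ[{x : P // x ≠ t} → k] GB.Deg c where
  toFun w := ⟨hV.split hu.lt w.1, hV.split_mem_deg hρ hu hGB hgm w.2⟩
  map_add' w w' := Subtype.ext (map_add _ w.1 w'.1)
  map_smul' r w := Subtype.ext (hV.split_smul hu.lt (GB.emb r) w.1)

theorem degSplit_degAct_genDegOne {c : ℕ} (x : GB.Deg c) :
    hV.degSplit hρ hu hGB hgm c (gm.degAct c 1 (tp x (genDegOne hρ hu hgm)))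
      = op (Pi.single (lowerToCompl hu.lt ⟨u, le_rfl⟩) 1 : {x : P // x ≠ t} → k) • x :=
  Subtype.ext <| by
    change hV.split hu.lt (x.1 • vb ⟨u, le_rfl⟩) = x.1 * GB.emb (Pi.single _ (1 : k))
    rw [hV.split_smul, hV.split_vb, hGB.emb_single]

theorem tp_degSplit_degAct {c : ℕ} (x : TensorR _ (GB.Deg c) (gm.Deg 1)) :
    tp (hV.degSplit hρ hu hGB hgm c (gm.degAct c 1 x)) (genDegOne hρ hu hgm) = x := by
  induction x using TensorR.ind with
  | h0 => rw [map_zero, map_zero, tp_zero_left]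
  | hadd x y hx hy => rw [map_add, map_add, tp_add_left, hx, hy]
  | htp x w =>
    have hgen : (Pi.single (lowerToCompl hu.lt ⟨u, le_rfl⟩) 1 : {x : P // x ≠ t} → k) •
        genDegOne hρ hu hgm = genDegOne hρ hu hgm := Subtype.ext <| by
      change GB.emb (Pi.single _ (1 : k)) • vb ⟨u, le_rfl⟩ = vb ⟨u, le_rfl⟩
      rw [hGB.emb_single, ← hV.split_vb hu.lt, hV.split_smul_vb_self]
    obtain ⟨c, rfl⟩ := exists_const_smul_genDegOne hGB hρ hu hgm w
    rw [← tp_balance, ← hGB.const_smul_deg, hV.degSplit_degAct_genDegOne, tp_balance, hgen]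

def inducedFromDegOne : gm.barData.InducedFromDegOne where
  split c := ((tpRightL (genDegOne hρ hu hgm)).comp (hV.degSplit hρ hu hGB hgm c) :
    gm.Deg (c + 1) →ₗ[{x : P // x ≠ t} → k]
      TensorR ({x : P // x ≠ t} → k) (GB.Deg c) (gm.Deg 1))
  act_split _ w := Subtype.ext (hV.split_smul_vb_self hu.lt w.1)
  split_act _ x := hV.tp_degSplit_degAct hρ hu hGB hgm x
  split_act_tp _ _ x w :=
    congrArg (tp (R := {x : P // x ≠ t} → k) · (genDegOne hρ hu hgm))
      (Subtype.ext (hV.split_smul hu.lt x.1 w.1))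

end IsIdealBasis

end Graded

end IdealBasis

theorem tor_of_shifted_projective_vanishes_general
    (k : Type) [Field k] (P : Type) [PartialOrder P] [Fintype P] [DecidableEq P]
    (ρ : P → P → ℕ) (hρ : LengthFn ρ)
    (t : P)
    (u : P) (hu : u ⋖ t)
    (B : Type) [Ring B] [Algebra k B]
    (incB : IncAlg k {x : P // x ≠ t} B)
    (GB : GRing ({x : P // x ≠ t} → k) B)
    (hGB : IncGrading incB (fun x y : {x : P // x ≠ t} => ρ ↑x ↑y) GB)
    (V : Type) [AddCommGroup V] [Module B V] [Module k V] [IsScalarTower k B V]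
    (vb : {x : P // x ≤ u} → V)
    (hvb_indep : LinearIndependent k vb)
    (hvb_span : Submodule.span k (Set.range vb) = ⊤)
    (hact : ∀ (x y : {x : P // x ≠ t}) (h : x ≤ y) (z : {x : P // x ≤ u}),
      incB.e x y • vb z =
        if hyz : (↑y : P) = ↑z then
          vb ⟨↑x, (Subtype.coe_le_coe.mpr h).trans ((le_of_eq hyz).trans z.2)⟩
        else 0)
    (gm : GMod GB V)
    (hgm : ∀ d : ℕ, (gm.deg d : Set V) =
      ↑(Submodule.span k {w : V | ∃ z : {x : P // x ≤ u}, ρ ↑z t = d ∧ w = vb z})) :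
    ∀ n m : ℕ, m ≠ n + 1 → Subsingleton (gm.TorR n m) := by
  intro n m hm
  have : Subsingleton (gm.barData.N 0) := subsingleton_deg_zero hρ hu hgm
  have hV : IsIdealBasis incB vb := ⟨hvb_indep, hvb_span, hact⟩
  exact (hV.inducedFromDegOne hρ hu hGB hgm).tor_subsingleton hm

/-- Let `P` be a finite graded poset, `t` a maximal element,
`Q = P \ {t}`, `u` a predecessor of `t` and `B = k^a[Q]`.  Then
`Tor_{n-1,m}^B(S, B·e_{u,t}) = 0` for all `m ≠ n`.  (Here the graded left
`B`-module `B·e_{u,t}`, with basis `{e_{x,t} : x ≤ u}` and `e_{x,t}` of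
degree `l([x,t])`, is axiomatised as `V` below, and the vanishing is stated with
the index shift `n ↦ n + 1`.) -/
theorem tor_of_shifted_projective_vanishes
    (k : Type) [Field k] (P : Type) [PartialOrder P] [Fintype P] [DecidableEq P]
    (ρ : P → P → ℕ) (hρ : LengthFn ρ)
    (A : Type) [Ring A] [Algebra k A] (inc : IncAlg k P A)
    (GA : GRing (P → k) A) (hGA : IncGrading inc ρ GA)
    (t : P) (ht : ∀ x : P, t ≤ x → x = t)
    (u : P) (hu : u ⋖ t)
    (B : Type) [Ring B] [Algebra k B]
    (incB : IncAlg k {x : P // x ≠ t} B)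
    (hρQ : LengthFn (fun x y : {x : P // x ≠ t} => ρ ↑x ↑y))
    (GB : GRing ({x : P // x ≠ t} → k) B)
    (hGB : IncGrading incB (fun x y : {x : P // x ≠ t} => ρ ↑x ↑y) GB)
    (V : Type) [AddCommGroup V] [Module B V] [Module k V] [IsScalarTower k B V]
    (vb : {x : P // x ≤ u} → V)
    (hvb_indep : LinearIndependent k vb)
    (hvb_span : Submodule.span k (Set.range vb) = ⊤)
    (hact : ∀ (x y : {x : P // x ≠ t}) (h : x ≤ y) (z : {x : P // x ≤ u}),
      incB.e x y • vb z =
        if hyz : (↑y : P) = ↑z then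
          vb ⟨↑x, (Subtype.coe_le_coe.mpr h).trans ((le_of_eq hyz).trans z.2)⟩
        else 0)
    (gm : GMod GB V)
    (hgm : ∀ d : ℕ, (gm.deg d : Set V) =
      ↑(Submodule.span k {w : V | ∃ z : {x : P // x ≤ u}, ρ ↑z t = d ∧ w = vb z})) :
    ∀ n m : ℕ, m ≠ n + 1 → Subsingleton (gm.TorR n m) :=
  tor_of_shifted_projective_vanishes_general k P ρ hρ t u hu B incB GB hGB V vb hvb_indep hvb_span
    hact gm hgm

end P1605
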